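/- Suppose σii = σjj = 1 and |σij| < 1, and let Φ(x) := (1/√(2π))·∫_{−∞}^x e^{−t²/2} dt be the standard normal cumulative distribution function. Then the transformed covariance satisfies τ(Φ,Φ) = (1/(2π))·arcsin(σij/2); equivalently, ∫_{ℝ²} Φ(x)·Φ(w)·p(x,w) dx dw − 1/4 = (1/(2π))·arcsin(σij/2). (This yields Kruskal's result: after transforming both marginals to be uniform, the new correlation is (6/π)·arcsin(σij/2).) -/

import Mathlib

open MeasureTheory Real

/-- Centered bivariate Gaussian density with covariance entries `σii, σjj, σij`. -/
noncomputable def gaussPDF2 (σii σjj σij : ℝ) (x w : ℝ) : ℝ :=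
  (1 / (2 * π * Real.sqrt (σii * σjj - σij ^ 2))) *
    Real.exp (-(σjj * x ^ 2 - 2 * σij * x * w + σii * w ^ 2) / (2 * (σii * σjj - σij ^ 2)))

/-- Centered univariate Gaussian density with variance `σ`. -/
noncomputable def gaussPDF1 (σ x : ℝ) : ℝ :=
  (1 / Real.sqrt (2 * π * σ)) * Real.exp (-x ^ 2 / (2 * σ))

/-- Transformed mean `ν(f)`. -/
noncomputable def transMean (σ : ℝ) (f : ℝ → ℝ) : ℝ := ∫ x : ℝ, f x * gaussPDF1 σ x

/-- Transformed covariance `τ(f, g)`. -/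
noncomputable def transCov (σii σjj σij : ℝ) (f g : ℝ → ℝ) : ℝ :=
  (∫ q : ℝ × ℝ, f q.1 * g q.2 * gaussPDF2 σii σjj σij q.1 q.2) -
    transMean σii f * transMean σjj g

/-- The standard normal cumulative distribution function. -/
noncomputable def stdNormalCDF (x : ℝ) : ℝ :=
  (1 / Real.sqrt (2 * π)) * ∫ t in Set.Iic x, Real.exp (-t ^ 2 / 2)

/-!
Write `φ_v` for `gaussPDF1 v` and `Φ` for `stdNormalCDF`. With unit variances the bivariate
density factors as `φ_1(x) · φ_{1-ρ²}(w - ρx)`, and smoothing `Φ` by a centred Gaussian of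
variance `s` only rescales it: `∫ Φ(a + u) φ_s(u) du = Φ(a / √(1 + s))`, since both sides
have derivative `φ_{1+s}(a)` and equal `1/2` at `a = 0`. Integrating out `w` therefore leaves
`K(c) = ∫ Φ(c x) Φ(x) φ_1(x) dx` with `c = ρ / √(2 - ρ²)`. Differentiating under the integral
sign and integrating by parts gives `K'(c) = 1 / (2π (1 + c²) √(2 + c²))`, the derivative of
`arctan (c / √(2 + c²)) / (2π)`, and `K(0) = 1/4`; finally
`arctan (c / √(2 + c²)) = arcsin (ρ / 2)`.
-/

open ProbabilityTheory Set Filter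

lemma gaussPDF1_eq_gaussianPDFReal {σ : ℝ} (hσ : 0 ≤ σ) :
    gaussPDF1 σ = gaussianPDFReal 0 σ.toNNReal := by
  ext x
  simp [gaussPDF1, gaussianPDFReal, Real.coe_toNNReal _ hσ]

lemma gaussPDF1_nonneg (σ x : ℝ) : 0 ≤ gaussPDF1 σ x := by
  unfold gaussPDF1; positivity

lemma gaussPDF1_neg (σ x : ℝ) : gaussPDF1 σ (-x) = gaussPDF1 σ x := by
  simp [gaussPDF1]

lemma continuous_gaussPDF1 (σ : ℝ) : Continuous (gaussPDF1 σ) := by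
  unfold gaussPDF1; fun_prop

lemma gaussPDF1_one_le_one (x : ℝ) : gaussPDF1 1 x ≤ 1 := by
  have h2π : 1 ≤ √(2 * π * 1) := Real.one_le_sqrt.2 (by linarith [pi_gt_three])
  have hexp : exp (-x ^ 2 / (2 * 1)) ≤ 1 := exp_le_one_iff.2 (by nlinarith [sq_nonneg x])
  calc gaussPDF1 1 x ≤ 1 * 1 := by
        unfold gaussPDF1
        gcongr
        exact div_le_one_of_le₀ h2π (by positivity)
    _ = 1 := one_mul 1

lemma integrable_gaussPDF1 {σ : ℝ} (hσ : 0 ≤ σ) : Integrable (gaussPDF1 σ) := by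
  rw [gaussPDF1_eq_gaussianPDFReal hσ]
  exact integrable_gaussianPDFReal _ _

lemma integral_gaussPDF1 {σ : ℝ} (hσ : 0 < σ) : ∫ x, gaussPDF1 σ x = 1 := by
  rw [gaussPDF1_eq_gaussianPDFReal hσ.le]
  exact integral_gaussianPDFReal_eq_one _ (by simpa using hσ)

lemma hasDerivAt_gaussPDF1 (σ x : ℝ) :
    HasDerivAt (gaussPDF1 σ) (-(x / σ) * gaussPDF1 σ x) x := by
  have hq : HasDerivAt (fun x : ℝ => -x ^ 2 / (2 * σ)) (-(x / σ)) x := by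
    refine (((hasDerivAt_pow 2 x).neg).div_const (2 * σ)).congr_deriv ?_
    push_cast
    ring
  refine (((hasDerivAt_exp _).comp x hq).const_mul (1 / √(2 * π * σ))).congr_deriv ?_
  simp only [gaussPDF1]
  ring

lemma integrable_mul_gaussPDF1 {σ : ℝ} (hσ : 0 < σ) : Integrable fun x => x * gaussPDF1 σ x := by
  refine ((integrable_mul_exp_neg_mul_sq (b := 1 / (2 * σ)) (by positivity)).const_mul
    (1 / √(2 * π * σ))).congr (Eventually.of_forall fun x => ?_)
  simp only [gaussPDF1]
  ring_nf

/-- Completing the square in the exponent. -/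
lemma gaussPDF1_add_mul_gaussPDF1 {s t : ℝ} (hs : 0 < s) (ht : 0 < t) (a u : ℝ) :
    gaussPDF1 t (a + u) * gaussPDF1 s u =
      gaussPDF1 (t + s) a * gaussPDF1 (t * s / (t + s)) (u + s * a / (t + s)) := by
  have hpre : √(2 * π * t) * √(2 * π * s) =
      √(2 * π * (t + s)) * √(2 * π * (t * s / (t + s))) := by
    rw [← sqrt_mul (by positivity), ← sqrt_mul (by positivity)]
    congr 1
    field_simp
  have hexp : -(a + u) ^ 2 / (2 * t) + -u ^ 2 / (2 * s) =
      -a ^ 2 / (2 * (t + s)) + -(u + s * a / (t + s)) ^ 2 / (2 * (t * s / (t + s))) := by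
    field_simp
    ring
  unfold gaussPDF1
  rw [mul_mul_mul_comm, mul_mul_mul_comm _ (exp _), ← exp_add, ← exp_add, hexp,
    one_div_mul_one_div, one_div_mul_one_div, hpre]

lemma integral_gaussPDF1_add_mul_gaussPDF1 {s t : ℝ} (hs : 0 < s) (ht : 0 < t) (a : ℝ) :
    ∫ u, gaussPDF1 t (a + u) * gaussPDF1 s u = gaussPDF1 (t + s) a := by
  simp_rw [gaussPDF1_add_mul_gaussPDF1 hs ht, integral_const_mul,
    integral_add_right_eq_self (fun u => gaussPDF1 (t * s / (t + s)) u),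
    integral_gaussPDF1 (by positivity : 0 < t * s / (t + s)), mul_one]

lemma gaussPDF1_one_div_sqrt {v : ℝ} (hv : 0 < v) (a : ℝ) :
    gaussPDF1 1 (a / √v) / √v = gaussPDF1 v a := by
  unfold gaussPDF1
  rw [div_pow, sq_sqrt hv.le, mul_one, mul_one, sqrt_mul (by positivity) v]
  field_simp

lemma gaussPDF1_one_mul_mul_gaussPDF1_one (c x : ℝ) :
    gaussPDF1 1 (c * x) * gaussPDF1 1 x =
      gaussPDF1 (1 + c ^ 2) 0 * gaussPDF1 (1 / (1 + c ^ 2)) x := by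
  have hpre : √(2 * π * 1) * √(2 * π * 1) =
      √(2 * π * (1 + c ^ 2)) * √(2 * π * (1 / (1 + c ^ 2))) := by
    rw [← sqrt_mul (by positivity), ← sqrt_mul (by positivity)]
    congr 1
    field_simp
  have hexp : -(c * x) ^ 2 / (2 * 1) + -x ^ 2 / (2 * 1) =
      -0 ^ 2 / (2 * (1 + c ^ 2)) + -x ^ 2 / (2 * (1 / (1 + c ^ 2))) := by
    field_simp
    ring
  unfold gaussPDF1
  rw [mul_mul_mul_comm, mul_mul_mul_comm _ (exp _), ← exp_add, ← exp_add, hexp,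
    one_div_mul_one_div, one_div_mul_one_div, hpre]

lemma gaussPDF2_eq_mul_gaussPDF1 {σii σjj σij : ℝ} (hσii : 0 < σii)
    (hd : 0 < σii * σjj - σij ^ 2) (x w : ℝ) :
    gaussPDF2 σii σjj σij x w =
      gaussPDF1 σii x * gaussPDF1 ((σii * σjj - σij ^ 2) / σii) (w - σij / σii * x) := by
  set d := σii * σjj - σij ^ 2 with hd_def
  have hpre : √(2 * π * σii) * √(2 * π * (d / σii)) = 2 * π * √d := by
    rw [← sqrt_mul (by positivity),
      show 2 * π * σii * (2 * π * (d / σii)) = (2 * π) ^ 2 * d by field_simp,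
      sqrt_mul (by positivity), sqrt_sq (by positivity)]
  have hexp : -(σjj * x ^ 2 - 2 * σij * x * w + σii * w ^ 2) / (2 * d) =
      -x ^ 2 / (2 * σii) + -(w - σij / σii * x) ^ 2 / (2 * (d / σii)) := by
    field_simp
    rw [hd_def]
    ring
  unfold gaussPDF1 gaussPDF2
  rw [mul_mul_mul_comm, ← exp_add, ← hexp, one_div_mul_one_div, hpre]

lemma integrable_gaussPDF2 {σii σjj σij : ℝ} (hσii : 0 < σii)
    (hd : 0 < σii * σjj - σij ^ 2) :
    Integrable fun q : ℝ × ℝ => gaussPDF2 σii σjj σij q.1 q.2 := by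
  have hv : 0 < (σii * σjj - σij ^ 2) / σii := by positivity
  simp_rw [gaussPDF2_eq_mul_gaussPDF1 hσii hd]
  rw [Measure.volume_eq_prod]
  refine (integrable_prod_iff (by unfold gaussPDF1; fun_prop)).2
    ⟨Eventually.of_forall fun x => ((integrable_gaussPDF1 hv.le).comp_sub_right
      (σij / σii * x)).const_mul (gaussPDF1 σii x), ?_⟩
  refine (integrable_gaussPDF1 hσii.le).congr (Eventually.of_forall fun x => ?_)
  simp only [norm_mul, norm_of_nonneg (gaussPDF1_nonneg _ _), integral_const_mul,
    integral_sub_right_eq_self (gaussPDF1 _), integral_gaussPDF1 hv, mul_one]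

lemma stdNormalCDF_eq_setIntegral (x : ℝ) : stdNormalCDF x = ∫ t in Iic x, gaussPDF1 1 t := by
  simp only [stdNormalCDF, gaussPDF1, mul_one, integral_const_mul]

lemma stdNormalCDF_add_setIntegral_Ioi (x : ℝ) :
    stdNormalCDF x + ∫ t in Ioi x, gaussPDF1 1 t = 1 := by
  rw [stdNormalCDF_eq_setIntegral, intervalIntegral.integral_Iic_add_Ioi
    (integrable_gaussPDF1 zero_le_one).integrableOn (integrable_gaussPDF1 zero_le_one).integrableOn,
    integral_gaussPDF1 one_pos]

lemma stdNormalCDF_add_stdNormalCDF_neg (x : ℝ) : stdNormalCDF x + stdNormalCDF (-x) = 1 := by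
  have hreflect := integral_comp_neg_Iic (-x) (gaussPDF1 1)
  simp only [gaussPDF1_neg, neg_neg] at hreflect
  rw [← stdNormalCDF_add_setIntegral_Ioi x, stdNormalCDF_eq_setIntegral (-x), hreflect]

lemma stdNormalCDF_zero : stdNormalCDF 0 = 1 / 2 := by
  linarith [neg_zero (G := ℝ) ▸ stdNormalCDF_add_stdNormalCDF_neg 0]

lemma stdNormalCDF_nonneg (x : ℝ) : 0 ≤ stdNormalCDF x := by
  rw [stdNormalCDF_eq_setIntegral]
  exact setIntegral_nonneg measurableSet_Iic fun t _ => gaussPDF1_nonneg 1 t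

lemma stdNormalCDF_le_one (x : ℝ) : stdNormalCDF x ≤ 1 := by
  have : 0 ≤ ∫ t in Ioi x, gaussPDF1 1 t :=
    setIntegral_nonneg measurableSet_Ioi fun t _ => gaussPDF1_nonneg 1 t
  linarith [stdNormalCDF_add_setIntegral_Ioi x]

lemma norm_stdNormalCDF_le_one (x : ℝ) : ‖stdNormalCDF x‖ ≤ 1 := by
  rw [Real.norm_of_nonneg (stdNormalCDF_nonneg x)]
  exact stdNormalCDF_le_one x

lemma hasDerivAt_stdNormalCDF (x : ℝ) : HasDerivAt stdNormalCDF (gaussPDF1 1 x) x := by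
  have hint := integrable_gaussPDF1 zero_le_one
  have hsplit : stdNormalCDF =
      fun y => (∫ t in Iic 0, gaussPDF1 1 t) + ∫ t in (0)..y, gaussPDF1 1 t := by
    ext y
    rw [stdNormalCDF_eq_setIntegral, ← intervalIntegral.integral_Iic_sub_Iic hint.integrableOn
      hint.integrableOn]
    ring
  rw [hsplit]
  exact (intervalIntegral.integral_hasDerivAt_right hint.intervalIntegrable
    hint.aestronglyMeasurable.stronglyMeasurableAtFilter
    (continuous_gaussPDF1 1).continuousAt).const_add _

lemma continuous_stdNormalCDF : Continuous stdNormalCDF :=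
  continuous_iff_continuousAt.2 fun x => (hasDerivAt_stdNormalCDF x).continuousAt

lemma integrable_stdNormalCDF_comp_mul {f g : ℝ → ℝ} (hf : Measurable f) (hg : Integrable g) :
    Integrable fun x => stdNormalCDF (f x) * g x :=
  hg.bdd_mul (continuous_stdNormalCDF.measurable.comp hf).aestronglyMeasurable
    (Eventually.of_forall fun x => norm_stdNormalCDF_le_one (f x))

lemma integrable_stdNormalCDF_mul {g : ℝ → ℝ} (hg : Integrable g) :
    Integrable fun x => stdNormalCDF x * g x :=
  integrable_stdNormalCDF_comp_mul (f := fun x => x) measurable_id hg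

/-- `Φ - 1/2` is odd. -/
lemma integral_stdNormalCDF_mul_gaussPDF1 {s : ℝ} (hs : 0 < s) :
    ∫ x, stdNormalCDF x * gaussPDF1 s x = 1 / 2 := by
  have hint := integrable_gaussPDF1 hs.le
  have hflip :
      ∫ x, stdNormalCDF (-x) * gaussPDF1 s x = ∫ x, stdNormalCDF x * gaussPDF1 s x := by
    simpa [gaussPDF1_neg] using
      (integral_neg_eq_self (fun x => stdNormalCDF (-x) * gaussPDF1 s x) volume).symm
  have hsum : (∫ x, stdNormalCDF x * gaussPDF1 s x) +
      ∫ x, stdNormalCDF (-x) * gaussPDF1 s x = 1 := by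
    rw [← integral_add (integrable_stdNormalCDF_mul hint)
      (integrable_stdNormalCDF_comp_mul measurable_neg hint)]
    simp_rw [← add_mul, stdNormalCDF_add_stdNormalCDF_neg, one_mul]
    exact integral_gaussPDF1 hs
  linarith

lemma eq_of_hasDerivAt_of_eq {E : Type*} [NormedAddCommGroup E] [NormedSpace ℝ E]
    {f g f' : ℝ → E} (hf : ∀ x, HasDerivAt f (f' x) x)
    (hg : ∀ x, HasDerivAt g (f' x) x) {x₀ : ℝ} (h₀ : f x₀ = g x₀) : f = g :=
  eq_of_fderiv_eq (fun x => (hf x).differentiableAt) (fun x => (hg x).differentiableAt)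
    (fun x => by rw [(hf x).hasFDerivAt.fderiv, (hg x).hasFDerivAt.fderiv]) x₀ h₀

/-- Dominated by `|α g|`, since `Φ' = φ_1 ≤ 1`. -/
lemma hasDerivAt_integral_stdNormalCDF_mul_add {α β g : ℝ → ℝ} (hα : Measurable α)
    (hβ : Measurable β) (hg : Integrable g) (hαg : Integrable fun x => α x * g x) (c : ℝ) :
    HasDerivAt (fun c => ∫ x, stdNormalCDF (c * α x + β x) * g x)
      (∫ x, gaussPDF1 1 (c * α x + β x) * α x * g x) c := by
  have hmeas : ∀ c, Measurable fun x => c * α x + β x := fun c => (hα.const_mul c).add hβ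
  refine (hasDerivAt_integral_of_dominated_loc_of_deriv_le (bound := fun x => ‖α x * g x‖)
    (F' := fun c x => gaussPDF1 1 (c * α x + β x) * α x * g x)
    univ_mem (Eventually.of_forall fun c => (integrable_stdNormalCDF_comp_mul (hmeas c) hg).1)
    (integrable_stdNormalCDF_comp_mul (hmeas c) hg) ?_
    (Eventually.of_forall fun x c _ => ?_) hαg.norm
    (Eventually.of_forall fun x c _ => ?_)).2
  · simp_rw [mul_assoc]
    exact ((continuous_gaussPDF1 1).measurable.comp (hmeas c)).aestronglyMeasurable.mul
      hαg.aestronglyMeasurable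
  · rw [mul_assoc, norm_mul, Real.norm_of_nonneg (gaussPDF1_nonneg 1 _)]
    exact mul_le_of_le_one_left (norm_nonneg _) (gaussPDF1_one_le_one _)
  · exact (((hasDerivAt_stdNormalCDF _).comp c
      ((hasDerivAt_mul_const (α x)).add_const (β x))).mul_const (g x))

lemma integral_stdNormalCDF_add_mul_gaussPDF1 {s : ℝ} (hs : 0 < s) (a : ℝ) :
    ∫ u, stdNormalCDF (a + u) * gaussPDF1 s u = stdNormalCDF (a / √(1 + s)) := by
  have h1s : 0 < 1 + s := by linarith
  suffices (fun a => ∫ u, stdNormalCDF (a * 1 + u) * gaussPDF1 s u) =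
      fun a => stdNormalCDF (a / √(1 + s)) by
    simpa using congrFun this a
  refine eq_of_hasDerivAt_of_eq (f' := gaussPDF1 (1 + s)) (fun a => ?_) (fun a => ?_) (x₀ := 0) ?_
  · have := hasDerivAt_integral_stdNormalCDF_mul_add (α := fun _ => 1) (β := id)
      measurable_const measurable_id (integrable_gaussPDF1 hs.le)
      (by simpa using integrable_gaussPDF1 hs.le) a
    simpa [integral_gaussPDF1_add_mul_gaussPDF1 hs one_pos] using this
  · refine ((hasDerivAt_stdNormalCDF _).comp a
      ((hasDerivAt_id a).div_const √(1 + s))).congr_deriv ?_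
    rw [← gaussPDF1_one_div_sqrt h1s]
    simp [div_eq_mul_inv]
  · simp [stdNormalCDF_zero, integral_stdNormalCDF_mul_gaussPDF1 hs]

lemma integral_stdNormalCDF_mul_gaussPDF1_sub {s : ℝ} (hs : 0 < s) (m : ℝ) :
    ∫ w, stdNormalCDF w * gaussPDF1 s (w - m) = stdNormalCDF (m / √(1 + s)) := by
  rw [← integral_stdNormalCDF_add_mul_gaussPDF1 hs m,
    ← integral_add_left_eq_self (fun w => stdNormalCDF w * gaussPDF1 s (w - m)) m]
  simp

/-- Integration by parts, with `x φ_v(x) = -(v φ_v)'(x)`. -/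
lemma integral_stdNormalCDF_mul_mul_gaussPDF1 {v : ℝ} (hv : 0 < v) :
    ∫ x, stdNormalCDF x * (x * gaussPDF1 v x) = v * gaussPDF1 (1 + v) 0 := by
  have hV : ∀ x, HasDerivAt (fun x => -v * gaussPDF1 v x) (x * gaussPDF1 v x) x := fun x =>
    ((hasDerivAt_gaussPDF1 v x).const_mul (-v)).congr_deriv (by field_simp)
  have hint : Integrable fun x => -v * gaussPDF1 v x := (integrable_gaussPDF1 hv.le).const_mul _
  rw [integral_mul_deriv_eq_deriv_mul_of_integrable (fun x _ => hasDerivAt_stdNormalCDF x)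
    (fun x _ => hV x) (integrable_stdNormalCDF_mul (integrable_mul_gaussPDF1 hv))
    (hint.bdd_mul (continuous_gaussPDF1 1).aestronglyMeasurable (Eventually.of_forall fun x => by
      simpa [abs_of_nonneg (gaussPDF1_nonneg 1 x)] using gaussPDF1_one_le_one x))
    (integrable_stdNormalCDF_mul hint)]
  have hconv := integral_gaussPDF1_add_mul_gaussPDF1 hv one_pos 0
  simp only [zero_add] at hconv
  simp_rw [mul_left_comm _ (-v), integral_const_mul, hconv]
  ring

lemma hasDerivAt_arctan_div_sqrt_two_add_sq (c : ℝ) :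
    HasDerivAt (fun c => arctan (c / √(2 + c ^ 2))) (1 / ((1 + c ^ 2) * √(2 + c ^ 2))) c := by
  have h2c : 0 < 2 + c ^ 2 := by positivity
  have hr : 0 < √(2 + c ^ 2) := sqrt_pos.2 h2c
  have hsq : √(2 + c ^ 2) ^ 2 = 2 + c ^ 2 := sq_sqrt h2c.le
  have hroot : HasDerivAt (fun c => √(2 + c ^ 2)) (c / √(2 + c ^ 2)) c := by
    refine ((((hasDerivAt_pow 2 c).const_add 2).sqrt h2c.ne')).congr_deriv ?_
    push_cast
    field_simp
  refine ((hasDerivAt_arctan _).comp c ((hasDerivAt_id c).div hroot hr.ne')).congr_deriv ?_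
  simp only [Pi.div_apply, id, div_pow, hsq]
  field_simp
  rw [hsq]
  ring

lemma integral_stdNormalCDF_const_mul_mul_stdNormalCDF_mul_gaussPDF1 (c : ℝ) :
    ∫ x, stdNormalCDF (c * x) * (stdNormalCDF x * gaussPDF1 1 x) =
      1 / 4 + 1 / (2 * π) * arctan (c / √(2 + c ^ 2)) := by
  have hg := integrable_stdNormalCDF_mul (integrable_gaussPDF1 zero_le_one)
  have hxg : Integrable fun x => x * (stdNormalCDF x * gaussPDF1 1 x) := by
    simpa only [mul_left_comm] using integrable_stdNormalCDF_mul (integrable_mul_gaussPDF1 one_pos)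
  suffices (fun c => ∫ x, stdNormalCDF (c * x + 0) * (stdNormalCDF x * gaussPDF1 1 x)) =
      fun c => 1 / 4 + 1 / (2 * π) * arctan (c / √(2 + c ^ 2)) by
    simpa using congrFun this c
  refine eq_of_hasDerivAt_of_eq (f' := fun c => 1 / (2 * π) * (1 / ((1 + c ^ 2) * √(2 + c ^ 2))))
    (fun c => ?_) (fun c => ((hasDerivAt_arctan_div_sqrt_two_add_sq c).const_mul _).const_add _)
    (x₀ := 0) ?_
  · refine (hasDerivAt_integral_stdNormalCDF_mul_add (α := fun x => x) (β := fun _ => 0)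
      measurable_id measurable_const hg hxg c).congr_deriv ?_
    have hfactor : ∀ x, gaussPDF1 1 (c * x + 0) * x * (stdNormalCDF x * gaussPDF1 1 x) =
        gaussPDF1 (1 + c ^ 2) 0 * (stdNormalCDF x * (x * gaussPDF1 (1 / (1 + c ^ 2)) x)) := by
      intro x
      calc _ = gaussPDF1 1 (c * x) * gaussPDF1 1 x * (stdNormalCDF x * x) := by ring_nf
        _ = _ := by rw [gaussPDF1_one_mul_mul_gaussPDF1_one]; ring
    simp_rw [hfactor, integral_const_mul, integral_stdNormalCDF_mul_mul_gaussPDF1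
      (by positivity : 0 < 1 / (1 + c ^ 2))]
    simp only [gaussPDF1, zero_pow two_ne_zero, neg_zero, zero_div, exp_zero, mul_one]
    rw [show 2 * π * (1 + 1 / (1 + c ^ 2)) = 2 * π * (2 + c ^ 2) / (1 + c ^ 2) by
        field_simp; ring,
      sqrt_div (by positivity), sqrt_mul (by positivity) (1 + c ^ 2),
      sqrt_mul (by positivity) (2 + c ^ 2)]
    field_simp
    exact (sq_sqrt (by positivity)).symm
  · simp only [zero_mul, add_zero, stdNormalCDF_zero, integral_const_mul,
      integral_stdNormalCDF_mul_gaussPDF1 one_pos]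
    norm_num

lemma arctan_eq_arcsin_half {ρ : ℝ} (hρ : ρ ^ 2 < 2) :
    arctan (ρ / √(2 - ρ ^ 2) / √(2 + (ρ / √(2 - ρ ^ 2)) ^ 2)) = arcsin (ρ / 2) := by
  have h2 : 0 < 2 - ρ ^ 2 := by linarith
  have h4 : 0 < 4 - ρ ^ 2 := by linarith
  have hsum : 2 + (ρ / √(2 - ρ ^ 2)) ^ 2 = (4 - ρ ^ 2) / (2 - ρ ^ 2) := by
    rw [div_pow, sq_sqrt h2.le]
    field_simp
    ring
  have hhalf : 1 - (ρ / 2) ^ 2 = (4 - ρ ^ 2) / 2 ^ 2 := by ring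
  rw [arcsin_eq_arctan ⟨by nlinarith, by nlinarith⟩, hhalf, hsum, sqrt_div h4.le,
    sqrt_div h4.le, sqrt_sq zero_le_two]
  field_simp

lemma integral_stdNormalCDF_mul_stdNormalCDF_mul_gaussPDF2 {ρ : ℝ} (hρ : |ρ| < 1) :
    ∫ q : ℝ × ℝ, stdNormalCDF q.1 * stdNormalCDF q.2 * gaussPDF2 1 1 ρ q.1 q.2 =
      1 / 4 + 1 / (2 * π) * arcsin (ρ / 2) := by
  have hρ2 : ρ ^ 2 < 1 := (sq_lt_one_iff_abs_lt_one ρ).2 hρ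
  have hd : 0 < 1 * 1 - ρ ^ 2 := by linarith
  have hint : Integrable fun q : ℝ × ℝ =>
      stdNormalCDF q.1 * stdNormalCDF q.2 * gaussPDF2 1 1 ρ q.1 q.2 :=
    (integrable_gaussPDF2 one_pos hd).bdd_mul (c := 1)
      ((continuous_stdNormalCDF.comp continuous_fst).mul
        (continuous_stdNormalCDF.comp continuous_snd)).aestronglyMeasurable
      (Eventually.of_forall fun q => by
        simpa [norm_mul] using mul_le_one₀ (norm_stdNormalCDF_le_one q.1) (norm_nonneg _)
          (norm_stdNormalCDF_le_one q.2))
  have hinner : ∀ x, ∫ w, stdNormalCDF x * stdNormalCDF w * gaussPDF2 1 1 ρ x w =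
      stdNormalCDF (ρ / √(2 - ρ ^ 2) * x) * (stdNormalCDF x * gaussPDF1 1 x) := by
    intro x
    have hfactor : ∀ w, stdNormalCDF x * stdNormalCDF w * gaussPDF2 1 1 ρ x w =
        stdNormalCDF x * gaussPDF1 1 x *
          (stdNormalCDF w * gaussPDF1 (1 - ρ ^ 2) (w - ρ * x)) := by
      intro w
      rw [gaussPDF2_eq_mul_gaussPDF1 one_pos hd]
      ring_nf
    simp_rw [hfactor, integral_const_mul,
      integral_stdNormalCDF_mul_gaussPDF1_sub (s := 1 - ρ ^ 2) (by linarith)]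
    rw [show 1 + (1 - ρ ^ 2) = 2 - ρ ^ 2 by ring, div_mul_eq_mul_div]
    ring
  rw [Measure.volume_eq_prod, integral_prod _ (Measure.volume_eq_prod ℝ ℝ ▸ hint)]
  simp_rw [hinner]
  rw [integral_stdNormalCDF_const_mul_mul_stdNormalCDF_mul_gaussPDF1,
    arctan_eq_arcsin_half (by linarith)]

theorem transformed_covariance_normalCDF_kruskal
    (σij : ℝ) (h : |σij| < 1) :
    transCov 1 1 σij stdNormalCDF stdNormalCDF = (1 / (2 * π)) * Real.arcsin (σij / 2) ∧
    (∫ q : ℝ × ℝ, stdNormalCDF q.1 * stdNormalCDF q.2 * gaussPDF2 1 1 σij q.1 q.2) - 1 / 4 =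
      (1 / (2 * π)) * Real.arcsin (σij / 2) := by
  have hmean : transMean 1 stdNormalCDF = 1 / 2 := integral_stdNormalCDF_mul_gaussPDF1 one_pos
  rw [transCov, hmean, integral_stdNormalCDF_mul_stdNormalCDF_mul_gaussPDF2 h]
  constructor <;> ring
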